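/- Let h : [0,1] → ℝ be piecewise constant with breakpoints 0 = p_0 < p_1 < ... < p_m = 1 and values c_1 ≤ ... ≤ c_m (h = c_{i+1} on (p_i, p_{i+1}]), and set c_0 = 0. Then for all p ∈ (0,1], h(p) = Σ_{i=0}^{m-1} (c_{i+1} - c_i)(1 - p_i) · h_{p_i}(p), where h_q denotes the threshold function h_q(p) = 0 for p ≤ q and 1/(1-q) for p > q. -/

import Mathlib

/-! Since `(1 - q) * h_q(p)` is the indicator of `q < p`, at a point `p ∈ (p_j, p_{j+1}]` the sum
keeps exactly the increments `c_{i+1} - c_i` with `i ≤ j`, and these telescope to `c_{j+1} = h(p)`. -/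

/-- The threshold function `h_q`: `0` on `[0,q]` and `1/(1-q)` on `(q,1]`. -/
noncomputable def thresholdFn (q p : ℝ) : ℝ := if p ≤ q then 0 else 1 / (1 - q)

open Finset

lemma one_sub_mul_thresholdFn {q : ℝ} (hq : q ≠ 1) (p : ℝ) :
    (1 - q) * thresholdFn q p = if q < p then 1 else 0 := by
  by_cases hlt : q < p
  · rw [thresholdFn, if_neg hlt.not_ge, if_pos hlt]
    exact mul_one_div_cancel (sub_ne_zero.mpr hq.symm)
  · rw [thresholdFn, if_pos (not_lt.mp hlt), if_neg hlt, mul_zero]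

lemma Fin.exists_mem_Ioc_of_mem_Ioc {α : Type*} [LinearOrder α] {m : ℕ} (a : Fin (m + 1) → α)
    {x : α} (hx : x ∈ Set.Ioc (a 0) (a (Fin.last m))) :
    ∃ j : Fin m, x ∈ Set.Ioc (a j.castSucc) (a j.succ) := by
  induction m with
  | zero => exact absurd (hx.1.trans_le hx.2) (lt_irrefl _)
  | succ m ih =>
    by_cases hlast : x ≤ a (Fin.last m).castSucc
    · obtain ⟨j, hj⟩ := ih (a ∘ Fin.castSucc) ⟨hx.1, hlast⟩
      exact ⟨j.castSucc, hj⟩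
    · exact ⟨Fin.last m, not_le.mp hlast, hx.2⟩

lemma Monotone.apply_castSucc_lt_iff_le_of_mem_Ioc {α : Type*} [LinearOrder α] {m : ℕ}
    {a : Fin (m + 1) → α} (ha : Monotone a) {x : α} {j : Fin m} (hx : x ∈ Set.Ioc (a j.castSucc) (a j.succ))
    (i : Fin m) : a i.castSucc < x ↔ i ≤ j := by
  refine ⟨fun hi => ?_, fun hij => (ha (Fin.castSucc_le_castSucc_iff.mpr hij)).trans_lt hx.1⟩
  by_contra! hji
  have : a j.succ ≤ a i.castSucc := ha (Fin.succ_le_castSucc_iff.mpr hji)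
  exact absurd (hx.2.trans this) (not_le.mpr hi)

theorem threshold_decomposition_general (m : ℕ) (pts : Fin (m + 1) → ℝ)
    (c : Fin (m + 1) → ℝ) (h : ℝ → ℝ)
    (hp0 : pts 0 = 0) (hpm : pts (Fin.last m) = 1) (hpmono : StrictMono pts)
    (hc0 : c 0 = 0)
    (hstep : ∀ i : Fin m, ∀ p ∈ Set.Ioc (pts i.castSucc) (pts i.succ),
      h p = c i.succ) :
    ∀ p ∈ Set.Ioc (0 : ℝ) 1,
      h p = ∑ i : Fin m,
        (c i.succ - c i.castSucc) * (1 - pts i.castSucc) *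
          thresholdFn (pts i.castSucc) p := by
  intro p hp
  obtain ⟨j, hj⟩ := Fin.exists_mem_Ioc_of_mem_Ioc pts (by rwa [hp0, hpm])
  have hne_one (i : Fin m) : pts i.castSucc ≠ 1 :=
    hpm ▸ (hpmono (Fin.castSucc_lt_last i)).ne
  calc h p = c j.succ - c 0 := by rw [hstep j p hj, hc0, sub_zero]
    _ = ∑ i ∈ Iic j, (c i.succ - c i.castSucc) := (Fin.sum_Iic_sub j c).symm
    _ = ∑ i, if pts i.castSucc < p then c i.succ - c i.castSucc else 0 := by
      rw [← sum_filter]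
      congr 1
      ext i
      simp [hpmono.monotone.apply_castSucc_lt_iff_le_of_mem_Ioc hj]
    _ = _ := sum_congr rfl fun i _ => by
      rw [mul_assoc, one_sub_mul_thresholdFn (hne_one i), mul_ite, mul_one, mul_zero]

/-- A nondecreasing piecewise constant function `h` with breakpoints
`0 = p₀ < ⋯ < p_m = 1`, values `c₁ ≤ ⋯ ≤ c_m` (with `c₀ = 0`) decomposes as
`h(p) = ∑_{i=0}^{m-1} (c_{i+1} - c_i)(1 - p_i) h_{p_i}(p)` on `(0,1]`. -/
theorem threshold_decomposition (m : ℕ) (pts : Fin (m + 1) → ℝ)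
    (c : Fin (m + 1) → ℝ) (h : ℝ → ℝ)
    (hp0 : pts 0 = 0) (hpm : pts (Fin.last m) = 1) (hpmono : StrictMono pts)
    (hc0 : c 0 = 0) (hcmono : Monotone c)
    (hstep : ∀ i : Fin m, ∀ p ∈ Set.Ioc (pts i.castSucc) (pts i.succ),
      h p = c i.succ) :
    ∀ p ∈ Set.Ioc (0 : ℝ) 1,
      h p = ∑ i : Fin m,
        (c i.succ - c i.castSucc) * (1 - pts i.castSucc) *
          thresholdFn (pts i.castSucc) p :=
  threshold_decomposition_general m pts c h hp0 hpm hpmono hc0 hstep
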